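/- For all 1 ≤ a, b, a', b' ≤ d, all 1 ≤ i, j ≤ ℓ', and all integers k, l ≥ 0, the commutator in End_ℂ(P) satisfies ⁅S_i(a,b;k), S_j(a',b';l)⁆ = δ_{i,j}·( δ_{a',b}·S_i(a,b';k+l) − δ_{a,b'}·S_i(a',b;k+l) ). (This is the bosonic x-variable part of Proposition 4.1 of the paper: the operators S_i(a,b;k) realize on the Fock space the commutation relations of the direct sum of Takiff algebras ⊕_{i=1}^{ℓ'} gl_d[t]/t^{γ_i} gl_d[t].) -/

import Mathlib

/-!
Each summand of `S_i(a,b;k)` is an operator `∂_u ∘ μ(v)`, and the Weyl relation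
`∂_u μ(v) = μ(v) ∂_u + δ_{uv}` gives
`⁅∂_u μ(v), ∂_w μ(x)⁆ = δ_{ux} ∂_w μ(v) - δ_{wv} ∂_u μ(x)`.
Expanding the commutator of two `S`'s summand by summand, a term survives only when a position
`r` of one operator meets a position `s + n` (or `s` meets `r + k`) of the other. For `i ≠ j`
this never happens, since the position blocks `[l_i, l_i + γ_i)` are disjoint; for `i = j` the
surviving terms are exactly the summands of `S_i(·,·;k+n)`.
-/

open MvPolynomial

/-- Multiplication by the variable `v`, as a `ℂ`-linear endomorphism of the
polynomial ring. -/
noncomputable def mulOp {σ : Type*} (v : σ) :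
    Module.End ℂ (MvPolynomial σ ℂ) :=
  LinearMap.mulLeft ℂ (X v)

/-- The partial derivative with respect to the variable `v`, as a `ℂ`-linear endomorphism
of the polynomial ring. -/
noncomputable def derOp {σ : Type*} (v : σ) :
    Module.End ℂ (MvPolynomial σ ℂ) :=
  (pderiv v).toLinearMap

/-- The operator `S_i(a, b; k) = Σ_{r = l+1}^{l+γ-k} ∂_{x^b_r} ∘ x^a_{r+k}` on the bosonic
Fock space `MvPolynomial (Fin d × Fin m) ℂ`, where `l = l_i` and `γ = γ_i` (indices of the
`x`-variables are written 0-based, so `r` runs over `l, l+1, …, l+γ-k-1`). -/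
noncomputable def Takiff_S (d m : ℕ) (l γ : ℕ) (a b : Fin d) (k : ℕ) :
    Module.End ℂ (MvPolynomial (Fin d × Fin m) ℂ) :=
  ∑ r ∈ Finset.range (γ - k),
      if h : l + r + k < m then
        derOp (b, (⟨l + r, by omega⟩ : Fin m)) * mulOp (a, (⟨l + r + k, h⟩ : Fin m))
      else 0

section Weyl

variable {σ : Type*}

lemma pderiv_pderiv_comm (u w : σ) (p : MvPolynomial σ ℂ) :
    pderiv u (pderiv w p) = pderiv w (pderiv u p) := by
  classical
  -- the commutator of two derivations is a derivation, and this one kills every variable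
  have h : ⁅pderiv u, pderiv w⁆ = (0 : Derivation ℂ (MvPolynomial σ ℂ) (MvPolynomial σ ℂ)) :=
    derivation_ext fun v => by
      rw [Derivation.commutator_apply, pderiv_X, pderiv_X]
      simp only [Pi.single_apply, apply_ite, pderiv_one, map_zero, ite_self, sub_zero]
      rfl
  simpa [Derivation.commutator_apply, sub_eq_zero] using congrArg (· p) h

lemma derOp_mul_derOp_comm (u w : σ) : derOp u * derOp w = derOp w * derOp u :=
  LinearMap.ext fun p => pderiv_pderiv_comm u w p

lemma mulOp_mul_mulOp_comm (v x : σ) : mulOp v * mulOp x = mulOp x * mulOp v :=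
  LinearMap.ext fun p => mul_left_comm (X v) (X x) p

variable [DecidableEq σ]

lemma derOp_mul_mulOp (u v : σ) :
    derOp u * mulOp v = mulOp v * derOp u + if u = v then 1 else 0 := by
  refine LinearMap.ext fun p => ?_
  rcases eq_or_ne u v with rfl | huv
  · simp [derOp, mulOp, add_comm]
  · simp [derOp, mulOp, pderiv_X_of_ne (Ne.symm huv), huv]

lemma commutator_derOp_mul_mulOp (u v w x : σ) :
    derOp u * mulOp v * (derOp w * mulOp x) - derOp w * mulOp x * (derOp u * mulOp v)
      = (if u = x then derOp w * mulOp v else 0) - (if w = v then derOp u * mulOp x else 0) := by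
  have expand : ∀ p q r s : σ, derOp p * mulOp q * (derOp r * mulOp s)
      = derOp p * derOp r * (mulOp q * mulOp s) - if r = q then derOp p * mulOp s else 0 := by
    intro p q r s
    calc derOp p * mulOp q * (derOp r * mulOp s) = derOp p * (mulOp q * derOp r) * mulOp s := by
          noncomm_ring
      _ = derOp p * (derOp r * mulOp q - if r = q then 1 else 0) * mulOp s := by
          rw [derOp_mul_mulOp r q, add_sub_cancel_right]
      _ = _ := by split_ifs <;> simp [mul_sub, sub_mul, mul_assoc]
  rw [expand, expand, derOp_mul_derOp_comm w u, mulOp_mul_mulOp_comm x v]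
  abel

end Weyl

lemma Finset.sum_range_sum_range_ite_eq_add {M : Type*} [AddCommMonoid M] (f : ℕ → ℕ → M)
    (G k n : ℕ) :
    ∑ r ∈ Finset.range (G - k), ∑ s ∈ Finset.range (G - n), (if r = s + n then f r s else 0)
      = ∑ s ∈ Finset.range (G - (k + n)), f (s + n) s := by
  rw [Finset.sum_comm]
  simp only [Finset.sum_ite_eq', Finset.mem_range]
  rw [← Finset.sum_filter]
  congr 1
  ext s
  simp only [Finset.mem_filter, Finset.mem_range]
  omega

lemma Finset.sum_filter_lt_add_eq_sum_filter_le {ι : Type*} [Fintype ι] [LinearOrder ι]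
    (γ : ι → ℕ) (t : ι) :
    ∑ j ∈ Finset.univ.filter (· < t), γ j + γ t = ∑ j ∈ Finset.univ.filter (· ≤ t), γ j := by
  have : Finset.univ.filter (· ≤ t) = insert t (Finset.univ.filter (· < t)) := by
    ext j
    simp [le_iff_lt_or_eq, or_comm]
  rw [this, Finset.sum_insert (by simp), add_comm]

/-- `∂_{x^b_p} ∘ μ(x^a_q)`, with positions `p q : ℕ` and the junk value `0` when one of them
is not below `m`. -/
noncomputable def elemOp (d m : ℕ) (a b : Fin d) (p q : ℕ) :
    Module.End ℂ (MvPolynomial (Fin d × Fin m) ℂ) :=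
  if h : p < m ∧ q < m then derOp (b, ⟨p, h.1⟩) * mulOp (a, ⟨q, h.2⟩) else 0

section Takiff

variable {d m : ℕ}

lemma commutator_elemOp {p q p' q' : ℕ} (hp : p < m) (hq : q < m) (hp' : p' < m) (hq' : q' < m)
    (a b a' b' : Fin d) :
    elemOp d m a b p q * elemOp d m a' b' p' q' - elemOp d m a' b' p' q' * elemOp d m a b p q
      = (if b = a' ∧ p = q' then elemOp d m a b' p' q else 0)
        - (if b' = a ∧ p' = q then elemOp d m a' b p q' else 0) := by
  simp only [elemOp, dif_pos (And.intro hp hq), dif_pos (And.intro hp' hq'),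
    dif_pos (And.intro hp' hq), dif_pos (And.intro hp hq'), commutator_derOp_mul_mulOp,
    Prod.ext_iff, Fin.ext_iff]

lemma Takiff_S_eq_sum_elemOp (l γ : ℕ) (a b : Fin d) (k : ℕ) :
    Takiff_S d m l γ a b k = ∑ r ∈ Finset.range (γ - k), elemOp d m a b (l + r) (l + r + k) := by
  refine Finset.sum_congr rfl fun r _ => ?_
  by_cases h : l + r + k < m
  · rw [dif_pos h, elemOp, dif_pos ⟨by omega, h⟩]
  · rw [dif_neg h, elemOp, dif_neg fun h' => h h'.2]

lemma commutator_Takiff_S_eq_sum {L₁ G₁ L₂ G₂ : ℕ} (h₁ : L₁ + G₁ ≤ m) (h₂ : L₂ + G₂ ≤ m)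
    (a b a' b' : Fin d) (k n : ℕ) :
    Takiff_S d m L₁ G₁ a b k * Takiff_S d m L₂ G₂ a' b' n
        - Takiff_S d m L₂ G₂ a' b' n * Takiff_S d m L₁ G₁ a b k
      = (∑ r ∈ Finset.range (G₁ - k), ∑ s ∈ Finset.range (G₂ - n),
          if b = a' ∧ L₁ + r = L₂ + s + n then elemOp d m a b' (L₂ + s) (L₁ + r + k) else 0)
        - ∑ r ∈ Finset.range (G₁ - k), ∑ s ∈ Finset.range (G₂ - n),
          if b' = a ∧ L₂ + s = L₁ + r + k then elemOp d m a' b (L₁ + r) (L₂ + s + n) else 0 := by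
  simp only [Takiff_S_eq_sum_elemOp, Finset.sum_mul_sum]
  rw [Finset.sum_comm (s := Finset.range (G₂ - n))]
  simp only [← Finset.sum_sub_distrib]
  refine Finset.sum_congr rfl fun r hr => Finset.sum_congr rfl fun s hs => ?_
  rw [Finset.mem_range] at hr hs
  exact commutator_elemOp (by omega) (by omega) (by omega) (by omega) a b a' b'

lemma commutator_Takiff_S_of_disjoint {L₁ G₁ L₂ G₂ : ℕ} (h₁ : L₁ + G₁ ≤ m) (h₂ : L₂ + G₂ ≤ m)
    (hdisj : L₁ + G₁ ≤ L₂ ∨ L₂ + G₂ ≤ L₁) (a b a' b' : Fin d) (k n : ℕ) :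
    Takiff_S d m L₁ G₁ a b k * Takiff_S d m L₂ G₂ a' b' n
      - Takiff_S d m L₂ G₂ a' b' n * Takiff_S d m L₁ G₁ a b k = 0 := by
  rw [commutator_Takiff_S_eq_sum h₁ h₂, sub_eq_zero]
  refine (Finset.sum_eq_zero fun r hr => Finset.sum_eq_zero fun s hs => if_neg ?_).trans
    (Finset.sum_eq_zero fun r hr => Finset.sum_eq_zero fun s hs => if_neg ?_).symm <;>
  · rw [Finset.mem_range] at hr hs
    omega

lemma commutator_Takiff_S_self {L G : ℕ} (h : L + G ≤ m) (a b a' b' : Fin d) (k n : ℕ) :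
    Takiff_S d m L G a b k * Takiff_S d m L G a' b' n
        - Takiff_S d m L G a' b' n * Takiff_S d m L G a b k
      = (if a' = b then Takiff_S d m L G a b' (k + n) else 0)
        - (if a = b' then Takiff_S d m L G a' b (k + n) else 0) := by
  rw [commutator_Takiff_S_eq_sum h h]
  congr 1
  · split_ifs with hb
    · subst hb
      simp only [true_and, add_assoc, add_right_inj]
      rw [Finset.sum_range_sum_range_ite_eq_add, Takiff_S_eq_sum_elemOp]
      refine Finset.sum_congr rfl fun s _ => ?_
      congr 1
      omega
    · simp [Ne.symm hb]
  · split_ifs with ha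
    · subst ha
      simp only [true_and, add_assoc, add_right_inj]
      rw [Finset.sum_comm, Finset.sum_range_sum_range_ite_eq_add, Takiff_S_eq_sum_elemOp,
        add_comm k n]
      refine Finset.sum_congr rfl fun r _ => ?_
      congr 1
      omega
    · simp [Ne.symm ha]

end Takiff

theorem stmt7_general (d ℓ' : ℕ)
    (γ : Fin ℓ' → ℕ) (m : ℕ) (hm : m = ∑ i, γ i)
    (l : Fin ℓ' → ℕ)
    (hl : ∀ i, l i = ∑ j ∈ Finset.univ.filter (fun j => j < i), γ j)
    (i j : Fin ℓ') (a b a' b' : Fin d) (k n : ℕ) :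
    Takiff_S d m (l i) (γ i) a b k * Takiff_S d m (l j) (γ j) a' b' n
      - Takiff_S d m (l j) (γ j) a' b' n * Takiff_S d m (l i) (γ i) a b k
    = if i = j then
        (if a' = b then Takiff_S d m (l i) (γ i) a b' (k + n) else 0)
          - (if a = b' then Takiff_S d m (l i) (γ i) a' b (k + n) else 0)
      else 0 := by
  have block_le : ∀ t, l t + γ t ≤ m := fun t => by
    rw [hl, hm, Finset.sum_filter_lt_add_eq_sum_filter_le]
    exact Finset.sum_le_sum_of_subset (Finset.filter_subset _ _)
  have block_le_of_lt : ∀ t u, t < u → l t + γ t ≤ l u := fun t u htu => by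
    rw [hl, hl u, Finset.sum_filter_lt_add_eq_sum_filter_le]
    refine Finset.sum_le_sum_of_subset fun x hx => ?_
    simp only [Finset.mem_filter, Finset.mem_univ, true_and] at hx ⊢
    exact hx.trans_lt htu
  rcases eq_or_ne i j with rfl | hij
  · rw [if_pos rfl]
    exact commutator_Takiff_S_self (block_le i) a b a' b' k n
  · rw [if_neg hij]
    refine commutator_Takiff_S_of_disjoint (block_le i) (block_le j) ?_ a b a' b' k n
    rcases hij.lt_or_gt with h | h
    exacts [Or.inl (block_le_of_lt i j h), Or.inr (block_le_of_lt j i h)]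

/-- The operators `S_i(a,b;k)` satisfy the commutation relations of the
direct sum of Takiff algebras `⊕_{i=1}^{ℓ'} gl_d[t]/t^{γ_i} gl_d[t]`:
`⁅S_i(a,b;k), S_j(a',b';l)⁆ = δ_{ij} (δ_{a'b} S_i(a,b';k+l) - δ_{ab'} S_i(a',b;k+l))`. -/
theorem stmt7 (d ℓ' : ℕ) (hd : 1 ≤ d) (hℓ : 1 ≤ ℓ')
    (γ : Fin ℓ' → ℕ) (hγ : ∀ i, 0 < γ i) (m : ℕ) (hm : m = ∑ i, γ i)
    (l : Fin ℓ' → ℕ)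
    (hl : ∀ i, l i = ∑ j ∈ Finset.univ.filter (fun j => j < i), γ j)
    (i j : Fin ℓ') (a b a' b' : Fin d) (k n : ℕ) :
    Takiff_S d m (l i) (γ i) a b k * Takiff_S d m (l j) (γ j) a' b' n
      - Takiff_S d m (l j) (γ j) a' b' n * Takiff_S d m (l i) (γ i) a b k
    = if i = j then
        (if a' = b then Takiff_S d m (l i) (γ i) a b' (k + n) else 0)
          - (if a = b' then Takiff_S d m (l i) (γ i) a' b (k + n) else 0)
      else 0 :=
  stmt7_general d ℓ' γ m hm l hl i j a b a' b' k n
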